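/- Let $N \geq 1$, let $E$ be a real inner product space, and let $z_1,\dots,z_N$ and $z'_1,\dots,z'_N$ be vectors in $E$ with $\|z_i\| = \|z'_i\| = 1$ for all $i$. Define $D_{ij} = 1 - \langle z_i, z_j \rangle$, $D'_{ij} = 1 - \langle z'_i, z'_j \rangle$, $S_{ij} = \langle z_i, z_j \rangle$, $S'_{ij} = \langle z'_i, z'_j \rangle$, and let $\Pi$ be the set of nonnegative $N \times N$ matrices whose row sums and column sums all equal $1/N$. Then the first-order Gromov–Wasserstein distance is bounded by the global Manifold Alignment Regularization loss: $\inf_{\pi \in \Pi} \sum_{i,j,k,l=1}^{N} |D_{ij} - D'_{kl}| \,\pi_{ik}\pi_{jl} \;\leq\; \frac{1}{N^2}\sum_{i=1}^{N}\sum_{j=1}^{N} |S_{ij} - S'_{ij}|$. -/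
import Mathlib


open Finset RealInnerProductSpace

/-- The first-order (`p = 1`) discrete Gromov–Wasserstein distance between the
cosine-distance spaces of two families of unit vectors is bounded above by the global
Manifold Alignment Regularization loss `(1/N²) ∑ᵢⱼ |Sᵢⱼ - S'ᵢⱼ|`. -/
theorem gw1_le_mar_global {E : Type*} [NormedAddCommGroup E] [InnerProductSpace ℝ E]
    (N : ℕ) (hN : 1 ≤ N) (z z' : Fin N → E)
    (hz : ∀ i, ‖z i‖ = 1) (hz' : ∀ i, ‖z' i‖ = 1)
    (D D' S S' : Fin N → Fin N → ℝ)
    (hD : ∀ i j, D i j = 1 - ⟪z i, z j⟫)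
    (hD' : ∀ i j, D' i j = 1 - ⟪z' i, z' j⟫)
    (hS : ∀ i j, S i j = ⟪z i, z j⟫)
    (hS' : ∀ i j, S' i j = ⟪z' i, z' j⟫) :
    sInf {x : ℝ | ∃ π : Fin N → Fin N → ℝ,
        (∀ i k, 0 ≤ π i k) ∧
        (∀ i, ∑ k, π i k = 1 / N) ∧
        (∀ k, ∑ i, π i k = 1 / N) ∧
        x = ∑ i, ∑ j, ∑ k, ∑ l, |D i j - D' k l| * (π i k * π j l)} ≤
      (1 / (N : ℝ) ^ 2) * ∑ i, ∑ j, |S i j - S' i j| := by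
  have hbdd : BddBelow {x : ℝ | ∃ π : Fin N → Fin N → ℝ,
        (∀ i k, 0 ≤ π i k) ∧
        (∀ i, ∑ k, π i k = 1 / N) ∧
        (∀ k, ∑ i, π i k = 1 / N) ∧
        x = ∑ i, ∑ j, ∑ k, ∑ l, |D i j - D' k l| * (π i k * π j l)} := by
    refine ⟨0, ?_⟩
    rintro x ⟨π, hpos, _, _, rfl⟩
    refine Finset.sum_nonneg fun i _ => Finset.sum_nonneg fun j _ =>
      Finset.sum_nonneg fun k _ => Finset.sum_nonneg fun l _ => ?_
    exact mul_nonneg (abs_nonneg _) (mul_nonneg (hpos i k) (hpos j l))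
  have hmem : (1 / (N : ℝ) ^ 2) * ∑ i, ∑ j, |S i j - S' i j| ∈
      {x : ℝ | ∃ π : Fin N → Fin N → ℝ,
        (∀ i k, 0 ≤ π i k) ∧
        (∀ i, ∑ k, π i k = 1 / N) ∧
        (∀ k, ∑ i, π i k = 1 / N) ∧
        x = ∑ i, ∑ j, ∑ k, ∑ l, |D i j - D' k l| * (π i k * π j l)} := by
    refine ⟨fun i k => if i = k then (1 / N : ℝ) else 0, ?_, ?_, ?_, ?_⟩
    · intro i k; dsimp only; split <;> positivity
    · intro i; simp
    · intro k; simp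
    · have : ∀ i j : Fin N,
        (∑ k, ∑ l, |D i j - D' k l| *
          ((if i = k then (1 / N : ℝ) else 0) * (if j = l then (1 / N : ℝ) else 0)))
          = |D i j - D' i j| * (1 / N * (1 / N)) := by
        intro i j
        simp [mul_ite, mul_zero, ite_mul, zero_mul, Finset.sum_ite_eq]
      simp only [this]
      have habs : ∀ i j : Fin N, |D i j - D' i j| = |S i j - S' i j| := by
        intro i j
        rw [hD, hD', hS, hS']
        rw [show (1 : ℝ) - ⟪z i, z j⟫ - (1 - ⟪z' i, z' j⟫) = -(⟪z i, z j⟫ - ⟪z' i, z' j⟫) by ring,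
          abs_neg]
      simp only [habs]
      rw [Finset.mul_sum]
      refine Finset.sum_congr rfl fun i _ => ?_
      rw [Finset.mul_sum]
      refine Finset.sum_congr rfl fun j _ => ?_
      ring
  exact csInf_le hbdd hmem
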